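/- Let (sᵢ) be a sequence of nonnegative reals with sᵢ ≤ K·hⁱ for all i ≥ 1, where K ≥ 0 and 0 < h < 1. Then for every n ≥ 1, the sum over strictly increasing n-tuples (i₁ < ... < iₙ) of positive integers of ∏_{j=1}^n s_{i_j} is at most Kⁿ · h^{n(n+1)/2} / ∏_{i=1}^n (1 - hⁱ). -/

import Mathlib

set_option maxHeartbeats 1000000

open Finset

/-- Difference map: `dphi f j = f j - f (j-1) - 1` (with `f (-1) = 0` convention). -/
def dphi (n : ℕ) (f : Fin n → ℕ) (j : Fin n) : ℕ :=
  if j.val = 0 then f j - 1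
  else f j - f ⟨j.val - 1, lt_of_le_of_lt (Nat.sub_le _ _) j.isLt⟩ - 1

def dphiN (n : ℕ) (f : Fin n → ℕ) (m : ℕ) : ℕ :=
  if hm : m < n then dphi n f ⟨m, hm⟩ else 0

lemma recon {n : ℕ} (f : Fin n → ℕ) (hmono : StrictMono f) (hpos : ∀ j, 1 ≤ f j) :
    ∀ v (j : Fin n), j.val = v → f j = v + 1 + ∑ m ∈ range (v + 1), dphiN n f m := by
  intro v
  induction v with
  | zero =>
    intro j hj
    have h0 : (0 : ℕ) < n := hj ▸ j.isLt
    have hje : j = ⟨0, h0⟩ := Fin.ext hj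
    have : dphiN n f 0 = f j - 1 := by
      rw [dphiN, dif_pos h0, ← hje, dphi, if_pos hj]
    rw [Finset.sum_range_one, this]
    have := hpos j
    omega
  | succ v ih =>
    intro j hj
    have hv : v < n := by have := j.isLt; omega
    set j' : Fin n := ⟨v, hv⟩ with hj'
    have hlt : j' < j := by simp [Fin.lt_def, hj, hj']
    have hfl : f j' < f j := hmono hlt
    have hd : dphi n f j = f j - f j' - 1 := by
      rw [dphi, if_neg (by omega)]
      have : (⟨(j : ℕ) - 1, lt_of_le_of_lt (Nat.sub_le _ _) j.isLt⟩ : Fin n) = j' :=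
        Fin.ext (by simp [hj, hj'])
      rw [this]
    have hN : dphiN n f (v + 1) = dphi n f j := by
      rw [dphiN, dif_pos (hj ▸ j.isLt)]
      congr 1
      exact (Fin.ext hj.symm)
    have ihv := ih j' rfl
    rw [sum_range_succ, hN, hd]
    omega

lemma swap_sum (F : ℕ → ℕ) : ∀ n : ℕ,
    ∑ j ∈ range n, ∑ m ∈ range (j + 1), F m = ∑ m ∈ range n, (n - m) * F m := by
  intro n
  induction n with
  | zero => simp
  | succ n ih =>
    rw [sum_range_succ, ih]
    have h1 : ∑ m ∈ range (n + 1), (n + 1 - m) * F m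
        = ∑ m ∈ range (n + 1), ((n - m) * F m + F m) := by
      refine sum_congr rfl fun m hm => ?_
      have := mem_range.mp hm
      have : n + 1 - m = (n - m) + 1 := by omega
      rw [this]; ring
    rw [h1, sum_add_distrib, sum_range_succ (fun m => (n - m) * F m)]
    simp

lemma gauss : ∀ n : ℕ, ∑ v ∈ range n, (v + 1) = n * (n + 1) / 2 := by
  intro n
  induction n with
  | zero => simp
  | succ n ih =>
    rw [sum_range_succ, ih]
    have : (n + 1) * (n + 1 + 1) = n * (n + 1) + 2 * (n + 1) := by ring
    omega

lemma sum_f_eq {n : ℕ} (f : Fin n → ℕ) (hmono : StrictMono f) (hpos : ∀ j, 1 ≤ f j) :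
    ∑ j, f j = n * (n + 1) / 2 + ∑ k : Fin n, (n - k.val) * dphi n f k := by
  have h1 : ∑ j, f j
      = ∑ v ∈ range n, (v + 1 + ∑ m ∈ range (v + 1), dphiN n f m) := by
    rw [← Fin.sum_univ_eq_sum_range (fun v => v + 1 + ∑ m ∈ range (v + 1), dphiN n f m) n]
    exact Finset.sum_congr rfl fun j _ => recon f hmono hpos j.val j rfl
  have h2 : ∑ k : Fin n, (n - k.val) * dphi n f k
      = ∑ v ∈ range n, (n - v) * dphiN n f v := by
    rw [← Fin.sum_univ_eq_sum_range (fun v => (n - v) * dphiN n f v) n]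
    refine Finset.sum_congr rfl fun k _ => ?_
    rw [dphiN, dif_pos k.isLt]
  rw [h1, h2, sum_add_distrib, gauss, swap_sum]

/-- Geometric series over `Fin n → ℕ`. -/
lemma geom_pi : ∀ (n : ℕ) (r : Fin n → ℝ), (∀ k, 0 ≤ r k) → (∀ k, r k < 1) →
    Summable (fun d : Fin n → ℕ => ∏ k, r k ^ d k) ∧
    ∑' d : Fin n → ℕ, ∏ k, r k ^ d k = ∏ k, (1 - r k)⁻¹ := by
  intro n
  induction n with
  | zero =>
    intro r _ _
    constructor
    · exact Summable.of_finite
    · simp [tsum_eq_single (fun (k : Fin 0) => 0) (fun b hb => absurd (funext fun k => k.elim0) hb)]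
  | succ n ih =>
    intro r hr0 hr1
    obtain ⟨hsum, htsum⟩ := ih (fun k => r k.succ) (fun k => hr0 _) (fun k => hr1 _)
    set e := Fin.consEquiv (fun _ : Fin (n + 1) => ℕ)
    have hcomp : ∀ p : ℕ × (Fin n → ℕ),
        (∏ k, r k ^ (e p) k) = r 0 ^ p.1 * ∏ k : Fin n, r k.succ ^ p.2 k := by
      intro p
      rw [Fin.prod_univ_succ]
      simp [e, Fin.consEquiv]
    have hg0 : Summable (fun m : ℕ => r 0 ^ m) := summable_geometric_of_lt_one (hr0 0) (hr1 0)
    have hprod : Summable (fun p : ℕ × (Fin n → ℕ) => r 0 ^ p.1 * ∏ k : Fin n, r k.succ ^ p.2 k) :=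
      Summable.mul_of_nonneg (f := fun m : ℕ => r 0 ^ m)
        (g := fun d : Fin n → ℕ => ∏ k : Fin n, r k.succ ^ d k) hg0 hsum
        (fun m => pow_nonneg (hr0 0) m)
        (fun d => prod_nonneg fun k _ => pow_nonneg (hr0 _) _)
    have hS : Summable (fun d : Fin (n + 1) → ℕ => ∏ k, r k ^ d k) :=
      e.summable_iff.mp (hprod.congr fun p => (hcomp p).symm)
    refine ⟨hS, ?_⟩
    rw [← e.tsum_eq]
    calc ∑' p : ℕ × (Fin n → ℕ), ∏ k, r k ^ (e p) k
        = ∑' p : ℕ × (Fin n → ℕ), r 0 ^ p.1 * ∏ k : Fin n, r k.succ ^ p.2 k :=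
          tsum_congr hcomp
      _ = (∑' m : ℕ, r 0 ^ m) * ∑' d : Fin n → ℕ, ∏ k : Fin n, r k.succ ^ d k :=
          (Summable.tsum_mul_tsum hg0 hsum hprod).symm
      _ = (1 - r 0)⁻¹ * ∏ k : Fin n, (1 - r k.succ)⁻¹ := by
          rw [tsum_geometric_of_lt_one (hr0 0) (hr1 0), htsum]
      _ = ∏ k, (1 - r k)⁻¹ := (Fin.prod_univ_succ fun k => (1 - r k)⁻¹).symm

/-- If `0 ≤ sᵢ ≤ K·hⁱ` for all `i ≥ 1`, then the sum over strictly increasing `n`-tuples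
of positive integers of the products `∏ s_{i_j}` converges and is at most
`Kⁿ · h^(n(n+1)/2) / ∏_{i=1}^n (1 - hⁱ)`. -/
theorem elementary_symmetric_bound (s : ℕ → ℝ) (K h : ℝ) (hK : 0 ≤ K)
    (h0 : 0 < h) (h1 : h < 1) (hs0 : ∀ i, 0 ≤ s i)
    (hs : ∀ i, 1 ≤ i → s i ≤ K * h ^ i) (n : ℕ) (hn : 1 ≤ n) :
    Summable (fun i : {f : Fin n → ℕ // StrictMono f ∧ ∀ j, 1 ≤ f j} =>
        ∏ j, s (i.1 j)) ∧
    (∑' i : {f : Fin n → ℕ // StrictMono f ∧ ∀ j, 1 ≤ f j}, ∏ j, s (i.1 j)) ≤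
      K ^ n * (h ^ (n * (n + 1) / 2) / ∏ i ∈ Finset.range n, (1 - h ^ (i + 1))) := by
  set r : Fin n → ℝ := fun k => h ^ (n - k.val) with hr
  have hr0 : ∀ k, 0 ≤ r k := fun k => pow_nonneg h0.le _
  have hr1 : ∀ k, r k < 1 := fun k => pow_lt_one₀ h0.le h1 (by have := k.isLt; omega)
  obtain ⟨hPsum, hPtsum⟩ := geom_pi n r hr0 hr1
  set C : ℝ := K ^ n * h ^ (n * (n + 1) / 2) with hC
  set g : (Fin n → ℕ) → ℝ := fun d => C * ∏ k, r k ^ d k with hgdef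
  have hgsum : Summable g := hPsum.mul_left C
  have hgnn : ∀ d, 0 ≤ g d := fun d =>
    mul_nonneg (mul_nonneg (pow_nonneg hK n) (pow_nonneg h0.le _))
      (prod_nonneg fun k _ => pow_nonneg (hr0 k) _)
  set e : {f : Fin n → ℕ // StrictMono f ∧ ∀ j, 1 ≤ f j} → (Fin n → ℕ) :=
    fun i => dphi n i.1 with hedef
  have hinj : Function.Injective e := by
    intro a b hab
    apply Subtype.ext
    funext j
    have hN : dphiN n a.1 = dphiN n b.1 := by
      funext m; rw [dphiN, dphiN]
      by_cases hm : m < n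
      · rw [dif_pos hm, dif_pos hm]
        exact congrFun hab _
      · rw [dif_neg hm, dif_neg hm]
    rw [recon a.1 a.2.1 a.2.2 j.val j rfl, recon b.1 b.2.1 b.2.2 j.val j rfl, hN]
  have hbound : ∀ i : {f : Fin n → ℕ // StrictMono f ∧ ∀ j, 1 ≤ f j},
      (∏ j, s (i.1 j)) ≤ g (e i) := by
    intro ⟨f, hmono, hpos⟩
    have step1 : (∏ j, s (f j)) ≤ ∏ j, (K * h ^ (f j)) :=
      prod_le_prod (fun j _ => hs0 _) (fun j _ => hs _ (hpos j))
    have step2 : (∏ j, (K * h ^ (f j))) = K ^ n * h ^ (∑ j, f j) := by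
      rw [prod_mul_distrib, prod_const, card_univ, Fintype.card_fin,
        prod_pow_eq_pow_sum]
    have step3 : h ^ (∑ j, f j)
        = h ^ (n * (n + 1) / 2) * ∏ k, r k ^ (dphi n f k) := by
      rw [sum_f_eq f hmono hpos, pow_add]
      congr 1
      rw [← prod_pow_eq_pow_sum]
      refine prod_congr rfl fun k _ => ?_
      rw [hr]
      exact pow_mul h _ _
    calc (∏ j, s (f j)) ≤ ∏ j, (K * h ^ (f j)) := step1
      _ = K ^ n * h ^ (∑ j, f j) := step2
      _ = g (dphi n f) := by rw [step3, hgdef, hC]; ring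
  have hsummable : Summable (fun i : {f : Fin n → ℕ // StrictMono f ∧ ∀ j, 1 ≤ f j} =>
      ∏ j, s (i.1 j)) :=
    Summable.of_nonneg_of_le (fun i => prod_nonneg fun j _ => hs0 _) hbound
      (hgsum.comp_injective hinj)
  refine ⟨hsummable, ?_⟩
  have hle : (∑' i : {f : Fin n → ℕ // StrictMono f ∧ ∀ j, 1 ≤ f j}, ∏ j, s (i.1 j))
      ≤ ∑' d : Fin n → ℕ, g d :=
    Summable.tsum_le_tsum_of_inj e hinj (fun d _ => hgnn d) hbound hsummable hgsum
  refine hle.trans_eq ?_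
  rw [hgdef]
  rw [tsum_mul_left, hPtsum]
  have hreindex : (∏ k : Fin n, (1 - r k)⁻¹) = (∏ i ∈ range n, (1 - h ^ (i + 1)))⁻¹ := by
    rw [Fin.prod_univ_eq_prod_range (fun v => (1 - h ^ (n - v))⁻¹) n]
    rw [← prod_inv_distrib]
    rw [← prod_range_reflect (fun v => (1 - h ^ (v + 1))⁻¹) n]
    refine prod_congr rfl fun v hv => ?_
    have hv' := mem_range.mp hv
    have hnv : n - v = (n - 1 - v) + 1 := by omega
    rw [hnv]
  rw [hreindex, hC]
  ring
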